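/- If a_1 < a_2 < ... < a_k are pairwise relatively prime natural numbers, each greater than 1, each composite, and each at most n, then k ≤ π(√n), where π is the prime counting function. -/

import Mathlib

/-!
Distinct members of a pairwise coprime family of integers `> 1` have distinct smallest prime
factors, and the smallest prime factor of a composite `m ≤ n` is at most `√n`. So
`i ↦ minFac (a i)` injects the family into the primes up to `√n`.
-/

open Finset Function

namespace Nat

theorem minFac_le_sqrt_of_not_prime {m n : ℕ} (hm : 0 < m) (hp : ¬ m.Prime) (hmn : m ≤ n) :
    m.minFac ≤ n.sqrt :=
  le_sqrt.mpr <| calc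
    m.minFac * m.minFac = m.minFac ^ 2 := (sq _).symm
    _ ≤ m := minFac_sq_le_self hm hp
    _ ≤ n := hmn

theorem minFac_injective_of_pairwise_coprime {ι : Type*} {f : ι → ℕ} (hf : ∀ i, f i ≠ 1)
    (hcop : Pairwise (Coprime on f)) : Injective fun i => (f i).minFac := by
  intro i j (hij : (f i).minFac = (f j).minFac)
  by_contra hne
  have hdvd_j : (f i).minFac ∣ f j := hij ▸ minFac_dvd (f j)
  exact (minFac_prime (hf i)).ne_one <|
    eq_one_of_dvd_coprimes (hcop hne) (minFac_dvd (f i)) hdvd_j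

theorem card_le_primeCounting_of_injective {ι : Type*} [Fintype ι] {f : ι → ℕ} {x : ℕ}
    (hf : Injective f) (hprime : ∀ i, (f i).Prime) (hle : ∀ i, f i ≤ x) :
    Fintype.card ι ≤ primeCounting x := calc
  Fintype.card ι = #(univ : Finset ι) := Finset.card_univ.symm
  _ ≤ #(primesLE x) :=
    card_le_card_of_injOn f (fun i _ => mem_primesLE.mpr ⟨hle i, hprime i⟩) hf.injOn
  _ = primeCounting x := primesLE_card_eq_primeCounting x

end Nat

theorem stmt_7_general (k n : ℕ) (a : Fin k → ℕ)
    (h1 : ∀ i, 1 < a i) (hcomp : ∀ i, ¬ (a i).Prime) (hle : ∀ i, a i ≤ n)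
    (hcop : ∀ i j, i ≠ j → Nat.Coprime (a i) (a j)) :
    k ≤ Nat.primeCounting (Nat.sqrt n) := by
  have hinj := Nat.minFac_injective_of_pairwise_coprime (fun i => (h1 i).ne') hcop
  simpa using Nat.card_le_primeCounting_of_injective hinj
    (fun i => Nat.minFac_prime (h1 i).ne')
    (fun i => Nat.minFac_le_sqrt_of_not_prime (by linarith [h1 i]) (hcomp i) (hle i))

theorem stmt_7 (k n : ℕ) (a : Fin k → ℕ) (hmono : StrictMono a)
    (h1 : ∀ i, 1 < a i) (hcomp : ∀ i, ¬ (a i).Prime) (hle : ∀ i, a i ≤ n)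
    (hcop : ∀ i j, i ≠ j → Nat.Coprime (a i) (a j)) :
    k ≤ Nat.primeCounting (Nat.sqrt n) :=
  stmt_7_general k n a h1 hcomp hle hcop
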